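/- Let w = u·a·v·b·Sym(u)·b be an element of F_n, where u·a is the principal prefix of w. If v = λ (the empty word), then w = a^n·b^{n+1}. -/

import Mathlib

/-!
Since `u·a` is the principal prefix, the fixed-point equation `γ(w) = w` reads
`u·a·b·Sym(u)·b = a·ũ·b·ū·b`. Comparing the parts of length `|u| + 1` gives `u·a = a·ũ` and
`Sym(u) = ū`, so `u` is a palindrome commuting with the letter `a`, i.e. `u = a^k`. Then
`w = a^(k+1)·b^(k+2)`, and `|w| = 2n + 1` forces `n = k + 1`.
-/

/-- The two-letter alphabet {a, b}. -/
inductive Letter : Type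
  | a : Letter
  | b : Letter
deriving DecidableEq, BEq, Repr

/-- Words over the alphabet {a, b}. -/
abbrev Word := List Letter

/-- δ(w) = |w|_a − |w|_b. -/
def delta (w : Word) : ℤ := (w.count Letter.a : ℤ) - (w.count Letter.b : ℤ)

/-- A Dyck word: δ(w) = 0 and δ(p) ≥ 0 for every prefix p of w. -/
def IsDyck (w : Word) : Prop := delta w = 0 ∧ ∀ p : Word, p <+: w → 0 ≤ delta p

/-- Membership in D_n: w = d·b with d a Dyck word of length 2n. -/
def InD (n : ℕ) (w : Word) : Prop :=
  ∃ d : Word, IsDyck d ∧ d.length = 2 * n ∧ w = d ++ [Letter.b]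

/-- Exchanging the letters a and b. -/
def Letter.flip : Letter → Letter
  | .a => .b
  | .b => .a

/-- The complement w̄ of a word w. -/
def comp (w : Word) : Word := w.map Letter.flip

/-- Sym(w): the complement of the mirror (reversal) of w. -/
def sym (w : Word) : Word := comp w.reverse

/-- A palindrome: a word equal to its mirror. -/
def Palindrome (w : Word) : Prop := w.reverse = w

/-- w' is a conjugate of w: w = u·v and w' = v·u. -/
def Conj (w w' : Word) : Prop := ∃ u v : Word, w = u ++ v ∧ w' = v ++ u

/-- u is the principal prefix of w: the shortest prefix of w with δ(u) maximal. -/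
def IsPrincipalPrefix (u w : Word) : Prop :=
  u <+: w ∧ (∀ p : Word, p <+: w → delta p ≤ delta u) ∧
    (∀ p : Word, p <+: w → delta p = delta u → u.length ≤ p.length)

/-- The graph of the map γ: writing w = u·v·b with u the principal prefix of w,
    γ(w) = v̄·b·ū. -/
def GammaRel (w w' : Word) : Prop :=
  ∃ u v : Word, IsPrincipalPrefix u w ∧ w = u ++ v ++ [Letter.b] ∧
    w' = comp v ++ [Letter.b] ++ comp u

/-- F_n: the fixed points of γ in D_n. -/
def InF (n : ℕ) (w : Word) : Prop := InD n w ∧ GammaRel w w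

/-- F_γ = ⋃_{n ≥ 1} F_n. -/
def InFgamma (w : Word) : Prop := ∃ n : ℕ, 1 ≤ n ∧ InF n w

/-- x^y: concatenation of the word x with itself y times. -/
def wpow (x : Word) : ℕ → Word
  | 0 => []
  | k + 1 => x ++ wpow x k

theorem List.eq_replicate_of_append_singleton_eq_cons {α : Type*} {x : α} :
    ∀ {u : List α}, u ++ [x] = x :: u → u = List.replicate u.length x
  | [], _ => rfl
  | y :: t, h => by
    obtain ⟨rfl, ht⟩ := List.cons_eq_cons.mp h
    rw [List.length_cons, List.replicate_succ, ← List.eq_replicate_of_append_singleton_eq_cons ht]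

@[simp]
theorem Letter.flip_a : Letter.a.flip = .b := rfl

@[simp]
theorem Letter.flip_b : Letter.b.flip = .a := rfl

@[simp]
theorem Letter.flip_flip (x : Letter) : x.flip.flip = x := by
  cases x <;> rfl

@[simp]
theorem comp_nil : comp [] = [] := rfl

@[simp]
theorem comp_cons (x : Letter) (w : Word) : comp (x :: w) = x.flip :: comp w := rfl

@[simp]
theorem comp_append (v w : Word) : comp (v ++ w) = comp v ++ comp w :=
  List.map_append

@[simp]
theorem comp_comp (w : Word) : comp (comp w) = w := by
  simp [comp, Function.comp_def]

@[simp]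
theorem comp_sym (w : Word) : comp (sym w) = w.reverse :=
  comp_comp w.reverse

@[simp]
theorem length_comp (w : Word) : (comp w).length = w.length :=
  List.length_map _

@[simp]
theorem length_sym (w : Word) : (sym w).length = w.length := by
  simp [sym]

theorem comp_injective : Function.Injective comp :=
  Function.LeftInverse.injective comp_comp

@[simp]
theorem comp_replicate (k : ℕ) (x : Letter) : comp (List.replicate k x) = List.replicate k x.flip :=
  List.map_replicate

theorem InD.length_eq {n : ℕ} {w : Word} (h : InD n w) : w.length = 2 * n + 1 := by
  obtain ⟨d, -, hd, rfl⟩ := h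
  simp [hd]

theorem IsPrincipalPrefix.unique {u u' w : Word} (h : IsPrincipalPrefix u w)
    (h' : IsPrincipalPrefix u' w) : u = u' := by
  obtain ⟨hpre, hmax, hmin⟩ := h
  obtain ⟨hpre', hmax', hmin'⟩ := h'
  have hdelta : delta u = delta u' := le_antisymm (hmax' u hpre) (hmax u' hpre')
  have hlen : u.length = u'.length :=
    le_antisymm (hmin u' hpre' hdelta.symm) (hmin' u hpre hdelta)
  exact (List.prefix_of_prefix_length_le hpre hpre' hlen.le).eq_of_length hlen

theorem GammaRel.eq_of_isPrincipalPrefix {w w' u v : Word} (hγ : GammaRel w w')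
    (hu : IsPrincipalPrefix u w) (hw : w = u ++ v ++ [Letter.b]) :
    w' = comp v ++ [Letter.b] ++ comp u := by
  obtain ⟨u', v', hu', hw', rfl⟩ := hγ
  obtain rfl := hu'.unique hu
  obtain rfl : v' = v := List.append_cancel_left (List.append_cancel_right (hw'.symm.trans hw))
  rfl

/-- Proposition (iii): for w = u·a·v·b·Sym(u)·b ∈ F_n with u·a its principal
    prefix, if v is the empty word then w = a^n·b^{n+1}. -/
theorem prop_form_iii (n : ℕ) (w u v : Word) (hw : InF n w)
    (hdec : w = u ++ [Letter.a] ++ v ++ [Letter.b] ++ sym u ++ [Letter.b])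
    (hpp : IsPrincipalPrefix (u ++ [Letter.a]) w)
    (hv : v = []) :
    w = List.replicate n Letter.a ++ List.replicate (n + 1) Letter.b := by
  subst hv
  obtain ⟨hD, hγ⟩ := hw
  have hfix : w = (Letter.a :: u.reverse) ++ (Letter.b :: comp u ++ [Letter.b]) := by
    refine (hγ.eq_of_isPrincipalPrefix hpp (v := Letter.b :: sym u) ?_).trans ?_
    · simpa using hdec
    · simp
  have hsplit : (u ++ [Letter.a]) ++ (Letter.b :: sym u ++ [Letter.b]) =
      (Letter.a :: u.reverse) ++ (Letter.b :: comp u ++ [Letter.b]) := by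
    rw [← hfix, hdec]
    simp
  obtain ⟨hhead, htail⟩ := List.append_inj hsplit (by simp)
  have hpal : u.reverse = u := by
    simpa [sym] using comp_injective (List.append_cancel_right (List.cons_injective htail))
  have hrep : u = List.replicate u.length Letter.a :=
    List.eq_replicate_of_append_singleton_eq_cons (hhead.trans (by rw [hpal]))
  have hn : n = u.length + 1 := by
    have hlen := hD.length_eq
    simp only [hdec, List.append_nil, List.length_append, length_sym, List.length_singleton] at hlen
    omega
  rw [hdec, hn, hrep]
  simp [sym, List.replicate_succ', ← List.replicate_succ]
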